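/- arXiv:2111.08982 — 2 statements merged into one kernel-verified Lean document; each statement's English description precedes it below -/
import Mathlib

section
/- Let H be a complex Hilbert space and let P and a be bounded self-adjoint operators on H such that ⟨P v, v⟩ ≥ 0 for all v ∈ H, and such that a⁻·‖v‖² ≤ ⟨a v, v⟩ ≤ a⁺·‖v‖² for all v ∈ H, where a⁻, a⁺ ∈ ℝ. Suppose τ ∈ ℂ with Re(τ) ≠ 0 and there exists v ∈ H, v ≠ 0, with P v - τ² v + 2 i τ (a v) = 0. Then a⁻ ≤ Im(τ) ≤ a⁺. -/
open scoped ComplexInnerProductSpace in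
/-- The imaginary part of an eigenvalue `τ` of the quadratic pencil `P - τ² + 2iτa`
(with `P ≥ 0` self-adjoint and `a` self-adjoint with numerical range in `[a⁻, a⁺]`,
and `Re τ ≠ 0`) lies in `[a⁻, a⁺]`. -/
theorem stmt_1 {H : Type*} [NormedAddCommGroup H] [InnerProductSpace ℂ H]
    (P a : H →L[ℂ] H)
    (hP : ∀ v w : H, ⟪P v, w⟫ = ⟪v, P w⟫)
    (ha : ∀ v w : H, ⟪a v, w⟫ = ⟪v, a w⟫)
    (hPpos : ∀ v : H, 0 ≤ (⟪P v, v⟫).re)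
    (aminus aplus : ℝ)
    (haminus : ∀ v : H, aminus * ‖v‖ ^ 2 ≤ (⟪a v, v⟫).re)
    (haplus : ∀ v : H, (⟪a v, v⟫).re ≤ aplus * ‖v‖ ^ 2)
    (τ : ℂ) (hτ : τ.re ≠ 0)
    (v : H) (hv : v ≠ 0)
    (heq : P v - (τ ^ 2) • v + (2 * Complex.I * τ) • a v = 0) :
    aminus ≤ τ.im ∧ τ.im ≤ aplus := by
  have hn : (0:ℝ) < ‖v‖ ^ 2 := pow_pos (norm_pos_iff.mpr hv) 2
  have hiv : ⟪P v - (τ ^ 2) • v + (2 * Complex.I * τ) • a v, v⟫ = 0 := by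
    rw [heq, inner_zero_left]
  rw [inner_add_left, inner_sub_left, inner_smul_left, inner_smul_left] at hiv
  have hPr : (⟪P v, v⟫).im = 0 := by
    have h1 : (starRingEnd ℂ) ⟪P v, v⟫ = ⟪P v, v⟫ := by
      rw [inner_conj_symm, hP]
    have := Complex.conj_eq_iff_im.mp h1
    exact this
  have har : ⟪a v, v⟫ = ((⟪a v, v⟫).re : ℂ) := by
    have h1 : (starRingEnd ℂ) ⟪a v, v⟫ = ⟪a v, v⟫ := by
      rw [inner_conj_symm, ha]
    exact (Complex.conj_eq_iff_re.mp h1).symm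
  have hvn : ⟪v, v⟫ = ((‖v‖ ^ 2 : ℝ) : ℂ) := by
    rw [inner_self_eq_norm_sq_to_K]; norm_num
  rw [har, hvn] at hiv
  have him := congrArg Complex.im hiv
  simp [pow_two, Complex.add_im, Complex.sub_im, Complex.mul_im, Complex.mul_re,
    Complex.conj_re, Complex.conj_im, hPr, Complex.ofReal_re, Complex.ofReal_im] at him
  -- him should give: equation relating τ.re, τ.im, ⟪a v,v⟫.re, ‖v‖^2
  have hkey : (⟪a v, v⟫).re = τ.im * ‖v‖ ^ 2 := by
    have h2 : τ.re * ((⟪a v, v⟫).re - τ.im * ‖v‖ ^ 2) = 0 := by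
      nlinarith [him]
    rcases mul_eq_zero.mp h2 with h | h
    · exact absurd h hτ
    · linarith
  constructor
  · have := haminus v
    rw [hkey] at this
    exact le_of_mul_le_mul_right (by linarith) hn
  · have := haplus v
    rw [hkey] at this
    exact le_of_mul_le_mul_right (by linarith) hn
end

section
/- Let f be a holomorphic function on the open unit disc D(0,1) ⊂ ℂ, let M > 0, C ≥ 0 and 0 < r < 1. Assume |f(z)| ≤ e^M for all z ∈ D(0,1) and |f(0)| ≥ e^{-CM}. Then the number of zeros of f in the closed disc {z : |z| ≤ 1-r}, counted with multiplicities (i.e. the sum over zeros z of the order of vanishing of f at z), is at most (2/r)·(1+C)·M. -/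
/-!
Jensen's inequality (`AnalyticOnNhd.sum_divisor_le`), applied between the radii `1 - r` and
`(1 - r) e^{r/2} < 1`, bounds the number of zeros in the smaller disc by
`log (e^M / ‖f 0‖) / (r / 2) ≤ (2 / r) (1 + C) M`. It counts zeros through Mathlib's divisor;
at each point this is the analytic order of `f`, as is `sInf {k | f⁽ᵏ⁾ z ≠ 0}`. The order is
finite on the whole disc because the disc is connected and `f 0 ≠ 0`.
-/

open Metric Real MeromorphicOn

section Order

variable {𝕜 E : Type*} [NontriviallyNormedField 𝕜] [NormedAddCommGroup E] [NormedSpace 𝕜 E]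
  {f : 𝕜 → E} {U : Set 𝕜} {z : 𝕜}

theorem AnalyticOnNhd.divisor_ne_zero_iff (hf : AnalyticOnNhd 𝕜 f U)
    (hfin : ∀ z ∈ U, analyticOrderAt f z ≠ ⊤) :
    divisor f U z ≠ 0 ↔ z ∈ U ∧ f z = 0 := by
  by_cases hz : z ∈ U
  · rw [hf.divisor_apply hz, ← Nat.cast_analyticOrderNatAt (hfin z hz)]
    simp [hz, analyticOrderNatAt, ENat.toNat_eq_zero, hfin z hz,
      (hf z hz).analyticOrderAt_eq_zero]
  · simp [hz]

variable [CharZero 𝕜] [CompleteSpace E]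

theorem AnalyticAt.sInf_setOf_iteratedDeriv_ne_zero (hf : AnalyticAt 𝕜 f z) :
    sInf {k : ℕ | iteratedDeriv k f z ≠ 0} = analyticOrderNatAt f z := by
  cases h : analyticOrderAt f z with
  | top =>
    have hvanish : ∀ k, iteratedDeriv k f z = 0 := fun k ↦
      (natCast_le_analyticOrderAt_iff_iteratedDeriv_eq_zero (n := k + 1) hf).1 (by simp [h]) k
        (Nat.lt_succ_self k)
    simp [analyticOrderNatAt, h, hvanish]
  | coe n =>
    obtain ⟨hlt, hn⟩ := (analyticOrderAt_eq_nat_iff_iteratedDeriv_eq_zero hf).1 h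
    rw [analyticOrderNatAt, h, ENat.toNat_natCast]
    exact le_antisymm (Nat.sInf_le hn)
      (le_csInf ⟨n, hn⟩ fun k hk ↦ not_lt.1 fun hkn ↦ hk (hlt k hkn))

theorem AnalyticOnNhd.divisor_apply_eq_sInf_setOf_iteratedDeriv_ne_zero
    (hf : AnalyticOnNhd 𝕜 f U) (hz : z ∈ U) (hfin : analyticOrderAt f z ≠ ⊤) :
    divisor f U z = sInf {k : ℕ | iteratedDeriv k f z ≠ 0} := by
  rw [hf.divisor_apply hz, (hf z hz).sInf_setOf_iteratedDeriv_ne_zero,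
    ← Nat.cast_analyticOrderNatAt hfin]
  rfl

theorem AnalyticOnNhd.exists_finset_zeros_sum_eq_finsum_divisor [ProperSpace 𝕜]
    (hf : AnalyticOnNhd 𝕜 f U) (hU : IsCompact U) (hfin : ∀ z ∈ U, analyticOrderAt f z ≠ ⊤) :
    ∃ Z : Finset 𝕜, (∀ z, z ∈ Z ↔ z ∈ U ∧ f z = 0) ∧
      ((∑ z ∈ Z, sInf {k : ℕ | iteratedDeriv k f z ≠ 0} : ℕ) : ℤ) = ∑ᶠ u, divisor f U u := by
  have hsupp := (divisor f U).finiteSupport hU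
  have hmem : ∀ z, z ∈ hsupp.toFinset ↔ z ∈ U ∧ f z = 0 := fun z ↦ by
    rw [Set.Finite.mem_toFinset, Function.mem_support, hf.divisor_ne_zero_iff hfin]
  refine ⟨hsupp.toFinset, hmem, ?_⟩
  rw [finsum_eq_sum _ hsupp, Nat.cast_sum]
  refine Finset.sum_congr rfl fun z hz ↦ ?_
  have hzU := ((hmem z).1 hz).1
  exact (hf.divisor_apply_eq_sInf_setOf_iteratedDeriv_ne_zero hzU (hfin z hzU)).symm

end Order

theorem one_sub_mul_exp_half_lt_one {r : ℝ} (hr : 0 < r) : (1 - r) * exp (r / 2) < 1 :=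
  calc (1 - r) * exp (r / 2) ≤ exp (-r) * exp (r / 2) := by
        gcongr; linarith [add_one_le_exp (-r)]
    _ = exp (-(r / 2)) := by rw [← exp_add]; ring_nf
    _ < 1 := exp_lt_one_iff.2 (by linarith)

theorem AnalyticOnNhd.finsum_divisor_closedBall_le {f : ℂ → ℂ} {M s t : ℝ}
    (hf : AnalyticOnNhd ℂ f (ball 0 1)) (hf0 : f 0 ≠ 0) (hM : 0 ≤ M)
    (hbound : ∀ z ∈ ball (0 : ℂ) 1, ‖f z‖ ≤ exp M) (hs : 0 < s) (ht : 0 < t)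
    (hst : s * exp t < 1) :
    ((∑ᶠ u, divisor f (closedBall 0 s) u : ℤ) : ℝ) ≤ (M - Real.log ‖f 0‖) / t := by
  have hR : closedBall (0 : ℂ) |s * exp t| ⊆ ball 0 1 :=
    closedBall_subset_ball (by rwa [abs_of_pos (by positivity)])
  have hsR : |s| < |s * exp t| := by
    rw [abs_of_pos hs, abs_of_pos (by positivity)]
    exact lt_mul_of_one_lt_right hs (one_lt_exp_iff.2 ht)
  have hjensen := (hf.mono hR).sum_divisor_le (abs_pos.2 hs.ne') hsR (one_le_exp hM) hf0
    fun z hz ↦ hbound z (hR (sphere_subset_closedBall hz))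
  rwa [abs_of_pos hs, mul_div_cancel_left₀ _ hs.ne', log_exp,
    log_div (exp_pos _).ne' (norm_ne_zero_iff.2 hf0), log_exp] at hjensen

theorem stmt_12_general (f : ℂ → ℂ) (M C r : ℝ)
    (hM : 0 < M) (hr0 : 0 < r) (hr1 : r < 1)
    (hf : DifferentiableOn ℂ f (Metric.ball (0 : ℂ) 1))
    (hbound : ∀ z ∈ Metric.ball (0 : ℂ) 1, ‖f z‖ ≤ Real.exp M)
    (h0 : Real.exp (-(C * M)) ≤ ‖f 0‖) :
    ∃ Z : Finset ℂ,
      (∀ z : ℂ, z ∈ Z ↔ z ∈ Metric.closedBall (0 : ℂ) (1 - r) ∧ f z = 0) ∧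
      ((∑ z ∈ Z, sInf {k : ℕ | iteratedDeriv k f z ≠ 0} : ℕ) : ℝ) ≤
        (2 / r) * (1 + C) * M := by
  have hfa : AnalyticOnNhd ℂ f (ball 0 1) := hf.analyticOnNhd isOpen_ball
  have hf0 : 0 < ‖f 0‖ := (exp_pos _).trans_le h0
  have hs : 0 < 1 - r := by linarith
  have hsub : closedBall (0 : ℂ) (1 - r) ⊆ ball 0 1 := closedBall_subset_ball (by linarith)
  have hfin : ∀ z ∈ closedBall (0 : ℂ) (1 - r), analyticOrderAt f z ≠ ⊤ := fun z hz ↦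
    hfa.analyticOrderAt_ne_top_of_isPreconnected (convex_ball 0 1).isPreconnected
      (mem_ball_self one_pos) (hsub hz)
      (by simp [(hfa 0 (mem_ball_self one_pos)).analyticOrderAt_eq_zero.2 (norm_pos_iff.1 hf0)])
  obtain ⟨Z, hZ, hsum⟩ :=
    (hfa.mono hsub).exists_finset_zeros_sum_eq_finsum_divisor (isCompact_closedBall 0 _) hfin
  refine ⟨Z, hZ, ?_⟩
  calc ((∑ z ∈ Z, sInf {k : ℕ | iteratedDeriv k f z ≠ 0} : ℕ) : ℝ)
      = ((∑ᶠ u, divisor f (closedBall 0 (1 - r)) u : ℤ) : ℝ) := by exact_mod_cast hsum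
    _ ≤ (M - log ‖f 0‖) / (r / 2) :=
      hfa.finsum_divisor_closedBall_le (norm_pos_iff.1 hf0) hM.le hbound hs (by positivity)
        (one_sub_mul_exp_half_lt_one hr0)
    _ ≤ (M + C * M) / (r / 2) := by gcongr; linarith [(le_log_iff_exp_le hf0).2 h0]
    _ = 2 / r * (1 + C) * M := by field_simp

/-- Jensen-type zero counting: if `f` is holomorphic on the unit disc with `|f| ≤ e^M`
and `|f(0)| ≥ e^{-CM}`, then the number of zeros of `f` in the closed disc of radius
`1 - r`, counted with multiplicity (the order of vanishing, i.e. the least `k` with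
`f^{(k)}(z) ≠ 0`), is at most `(2/r)(1+C)M`. -/
theorem stmt_12 (f : ℂ → ℂ) (M C r : ℝ)
    (hM : 0 < M) (hC : 0 ≤ C) (hr0 : 0 < r) (hr1 : r < 1)
    (hf : DifferentiableOn ℂ f (Metric.ball (0 : ℂ) 1))
    (hbound : ∀ z ∈ Metric.ball (0 : ℂ) 1, ‖f z‖ ≤ Real.exp M)
    (h0 : Real.exp (-(C * M)) ≤ ‖f 0‖) :
    ∃ Z : Finset ℂ,
      (∀ z : ℂ, z ∈ Z ↔ z ∈ Metric.closedBall (0 : ℂ) (1 - r) ∧ f z = 0) ∧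
      ((∑ z ∈ Z, sInf {k : ℕ | iteratedDeriv k f z ≠ 0} : ℕ) : ℝ) ≤
        (2 / r) * (1 + C) * M :=
  stmt_12_general f M C r hM hr0 hr1 hf hbound h0
end
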